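/- A polynomial P ∈ K⟨n⟩ satisfies δ_j P = 0 for all 1 ≤ j ≤ n if and only if P lies in the subspace Σ_{k=1}^n [X_k, K⟨n⟩] + K·1, i.e. P is the sum of a scalar and a finite sum of commutators of the form [X_k, Q] with Q ∈ K⟨n⟩. -/

import Mathlib

/-! Setup: the free associative algebra `K⟨X_1,…,X_n⟩` realized as the monoid
algebra of the free monoid on `Fin n`, together with the partial cyclic
derivatives `δ_j`, the number operator `N` and the cyclic symmetrization `C`. -/

noncomputable section

/-- `K⟨n⟩`, the ring of polynomials in `n` noncommuting indeterminates. -/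
abbrev FreePoly (K : Type) [CommSemiring K] (n : ℕ) : Type :=
  MonoidAlgebra K (FreeMonoid (Fin n))

/-- The monomial `X_{i_1} ⋯ X_{i_p}` associated to the word `w = [i_1,…,i_p]`. -/
def mono (K : Type) [Field K] {n : ℕ} (w : List (Fin n)) : FreePoly K n :=
  MonoidAlgebra.single (FreeMonoid.ofList w) 1

/-- The indeterminate `X k`. -/
def Xvar (K : Type) [Field K] {n : ℕ} (k : Fin n) : FreePoly K n := mono K [k]

variable {K : Type} [Field K] [CharZero K] {n : ℕ}

/-- The partial cyclic derivative `δ_j = μ̃ ∘ ∂_j`: on a monomial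
`X_{i_0} ⋯ X_{i_s}` it gives `∑_{p : i_p = j} X_{i_{p+1}} ⋯ X_{i_s} X_{i_0} ⋯ X_{i_{p-1}}`. -/
def cycDeriv (j : Fin n) : FreePoly K n →ₗ[K] FreePoly K n :=
  (Finsupp.lsum K fun w => LinearMap.toSpanSingleton K _
    (∑ p : Fin (FreeMonoid.toList w).length,
      if (FreeMonoid.toList w).get p = j then
        mono K ((FreeMonoid.toList w).drop (p + 1) ++ (FreeMonoid.toList w).take p)
      else 0)) ∘ₗ (MonoidAlgebra.coeffLinearEquiv K).toLinearMap

/-- The number operator `N`, multiplying a monomial by its degree. -/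
def numOp : FreePoly K n →ₗ[K] FreePoly K n :=
  (Finsupp.lsum K fun w => LinearMap.toSpanSingleton K _
    ((FreeMonoid.toList w).length • mono K (FreeMonoid.toList w))) ∘ₗ
    (MonoidAlgebra.coeffLinearEquiv K).toLinearMap

/-- The cyclic symmetrization `C`, sending a monomial of degree `p ≥ 1` to the
sum of its `p` cyclic rotations (and `1` to `0`). -/
def cycSym : FreePoly K n →ₗ[K] FreePoly K n :=
  (Finsupp.lsum K fun w => LinearMap.toSpanSingleton K _
    (∑ p ∈ Finset.range (FreeMonoid.toList w).length,
      mono K ((FreeMonoid.toList w).rotate (p + 1)))) ∘ₗ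
    (MonoidAlgebra.coeffLinearEquiv K).toLinearMap

end

/-! `δ_j (a b) = δ_j (b a)`, so every `δ_j` kills `1` and all commutators. Conversely,
`∑_j X_j δ_j = C`, and `N - C` maps into the commutator span `W = ∑_k [X_k, K⟨n⟩]`,
because a monomial minus one of its rotations telescopes into commutators with single
variables. Hence `δ_j P = 0` for all `j` gives `N P ∈ W`, and since `N` is invertible on
monomials of positive degree by an inverse preserving `W`, the part of `P` without constant
term lies in `W`. -/

section

variable {K : Type} [Field K] {n : ℕ}

lemma mono_nil : mono K ([] : List (Fin n)) = 1 := rfl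

lemma mono_append (u v : List (Fin n)) : mono K (u ++ v) = mono K u * mono K v := by
  simp [mono, MonoidAlgebra.single_mul_single]

lemma mono_cons (k : Fin n) (l : List (Fin n)) : mono K (k :: l) = Xvar K k * mono K l :=
  mono_append [k] l

lemma mono_concat (l : List (Fin n)) (k : Fin n) : mono K (l ++ [k]) = mono K l * Xvar K k :=
  mono_append l [k]

lemma FreePoly.linearMap_ext {M : Type*} [AddCommGroup M] [Module K M]
    {f g : FreePoly K n →ₗ[K] M}
    (h : ∀ l, f (mono K l) = g (mono K l)) : f = g :=
  (MonoidAlgebra.basis _ K).ext fun w => by simpa [mono] using h w.toList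

lemma FreePoly.map_mem_of_forall_mono {M : Type*} [AddCommGroup M] [Module K M]
    (f : FreePoly K n →ₗ[K] M) {S : Submodule K M} (h : ∀ l, f (mono K l) ∈ S)
    (P : FreePoly K n) : f P ∈ S := by
  have : S.mkQ ∘ₗ f = 0 := FreePoly.linearMap_ext fun l => by simpa using h l
  simpa using congr($this P)

lemma cycDeriv_mono (j : Fin n) (l : List (Fin n)) :
    cycDeriv j (mono K l) = ∑ p ∈ Finset.range l.length,
      if l[p]? = some j then mono K (l.drop (p + 1) ++ l.take p) else 0 := by
  simp only [cycDeriv, List.get_eq_getElem, mono, FreeMonoid.ofList_append, LinearMap.coe_comp,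
    Finsupp.coe_lsum, LinearEquiv.coe_coe, Function.comp_apply,
    MonoidAlgebra.coeffLinearEquiv_apply, MonoidAlgebra.coeff_single, FreeMonoid.toList_ofList,
    LinearMap.toSpanSingleton_apply, zero_smul, Finsupp.sum_single_index, one_smul,
    ← Fin.sum_univ_eq_sum_range, Fin.is_lt, getElem?_pos, Option.some.injEq]
  rfl

lemma numOp_mono (l : List (Fin n)) : numOp (mono K l) = l.length • mono K l := by
  simp [numOp, mono]

lemma cycSym_mono (l : List (Fin n)) :
    cycSym (mono K l) = ∑ p ∈ Finset.range l.length, mono K (l.rotate (p + 1)) := by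
  simp [cycSym, mono]

lemma cycDeriv_mono_cons (j k : Fin n) (l : List (Fin n)) :
    cycDeriv j (mono K (k :: l)) = cycDeriv j (mono K (l ++ [k])) := by
  rw [cycDeriv_mono, cycDeriv_mono, List.length_cons, List.length_append, List.length_singleton,
    Finset.sum_range_succ', Finset.sum_range_succ]
  congr 1
  · refine Finset.sum_congr rfl fun p hp => ?_
    have hp : p < l.length := Finset.mem_range.mp hp
    simp [List.getElem?_append_left hp, List.drop_append_of_le_length hp,
      List.take_append_of_le_length hp.le]
  · simp

lemma cycDeriv_mono_append_comm (j : Fin n) (u v : List (Fin n)) :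
    cycDeriv j (mono K (u ++ v)) = cycDeriv j (mono K (v ++ u)) := by
  induction u generalizing v with
  | nil => simp
  | cons k u ih => simp [cycDeriv_mono_cons, ih]

lemma cycDeriv_mul_comm (j : Fin n) (a b : FreePoly K n) :
    cycDeriv j (a * b) = cycDeriv j (b * a) := by
  have : (LinearMap.mul K _).compr₂ (cycDeriv j) =
      (LinearMap.mul K _).flip.compr₂ (cycDeriv j) :=
    FreePoly.linearMap_ext fun u => FreePoly.linearMap_ext fun v => by
      simp [← mono_append, cycDeriv_mono_append_comm j u]
  exact congr($this a b)

lemma cycDeriv_one (j : Fin n) : cycDeriv j (1 : FreePoly K n) = 0 := by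
  simp [← mono_nil, cycDeriv_mono]

lemma sum_range_rotate_succ {α M : Type*} [AddCommMonoid M] (f : List α → M) (l : List α) :
    ∑ p ∈ Finset.range l.length, f (l.rotate (p + 1)) =
      ∑ p ∈ Finset.range l.length, f (l.rotate p) := by
  cases l with
  | nil => simp
  | cons a t =>
    rw [List.length_cons, Finset.sum_range_succ,
      Finset.sum_range_succ' (fun p => f ((a :: t).rotate p)), ← List.length_cons,
      List.rotate_length, List.rotate_zero]

lemma sum_Xvar_mul_cycDeriv (P : FreePoly K n) :
    ∑ j, Xvar K j * cycDeriv j P = cycSym P := by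
  have : ∑ j, LinearMap.mulLeft K (Xvar K j) ∘ₗ cycDeriv j =
      (cycSym : FreePoly K n →ₗ[K] _) :=
    FreePoly.linearMap_ext fun l => by
      simp only [LinearMap.sum_apply, LinearMap.comp_apply, LinearMap.mulLeft_apply,
        cycDeriv_mono, Finset.mul_sum, mul_ite, mul_zero, ← mono_cons, cycSym_mono]
      rw [Finset.sum_comm, sum_range_rotate_succ (mono K)]
      refine Finset.sum_congr rfl fun p hp => ?_
      have hp : p < l.length := Finset.mem_range.mp hp
      rw [List.rotate_eq_drop_append_take hp.le, List.drop_eq_getElem_cons hp, List.cons_append]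
      simp [List.getElem?_eq_getElem hp]
  simpa using congr($this P)

variable (K n) in
noncomputable def commutatorSum : (Fin n → FreePoly K n) →ₗ[K] FreePoly K n :=
  ∑ k, (LinearMap.mulLeft K (Xvar K k) - LinearMap.mulRight K (Xvar K k)) ∘ₗ LinearMap.proj k

lemma commutatorSum_apply (Q : Fin n → FreePoly K n) :
    commutatorSum K n Q = ∑ k, (Xvar K k * Q k - Q k * Xvar K k) := by
  simp [commutatorSum]

lemma commutator_mem_range_commutatorSum (k : Fin n) (q : FreePoly K n) :
    Xvar K k * q - q * Xvar K k ∈ LinearMap.range (commutatorSum K n) :=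
  ⟨Pi.single k q, by rw [commutatorSum_apply, Finset.sum_eq_single k] <;> simp_all⟩

lemma mono_sub_mono_rotate_mem (l : List (Fin n)) (m : ℕ) :
    mono K l - mono K (l.rotate m) ∈ LinearMap.range (commutatorSum K n) := by
  induction m with
  | zero => simp
  | succ m ih =>
    rw [← sub_add_sub_cancel _ (mono K (l.rotate m)), ← List.rotate_rotate]
    refine add_mem ih ?_
    cases l.rotate m with
    | nil => simp
    | cons a t =>
      rw [List.rotate_cons_succ, List.rotate_zero, mono_cons, mono_concat]
      exact commutator_mem_range_commutatorSum a (mono K t)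

lemma numOp_sub_cycSym_mem (P : FreePoly K n) :
    numOp P - cycSym P ∈ LinearMap.range (commutatorSum K n) := by
  refine FreePoly.map_mem_of_forall_mono (numOp - cycSym) (fun l => ?_) P
  have : l.length • mono K l = ∑ _p ∈ Finset.range l.length, mono K l := by simp
  rw [LinearMap.sub_apply, numOp_mono, cycSym_mono, this, ← Finset.sum_sub_distrib]
  exact Submodule.sum_mem _ fun p _ => mono_sub_mono_rotate_mem l (p + 1)

/-- Since `(0 : K)⁻¹ = 0`, this sends the constants to `0`. -/
noncomputable def invNumOp : FreePoly K n →ₗ[K] FreePoly K n :=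
  (Finsupp.lsum K fun w => LinearMap.toSpanSingleton K _
    (((FreeMonoid.toList w).length : K)⁻¹ • mono K (FreeMonoid.toList w))) ∘ₗ
    (MonoidAlgebra.coeffLinearEquiv K).toLinearMap

lemma invNumOp_mono (l : List (Fin n)) :
    invNumOp (mono K l) = (l.length : K)⁻¹ • mono K l := by
  simp [invNumOp, mono]

lemma invNumOp_commutator_mem (k : Fin n) (q : FreePoly K n) :
    invNumOp (Xvar K k * q - q * Xvar K k) ∈ LinearMap.range (commutatorSum K n) := by
  refine FreePoly.map_mem_of_forall_mono
    (invNumOp ∘ₗ (LinearMap.mulLeft K (Xvar K k) - LinearMap.mulRight K (Xvar K k)))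
    (fun l => ?_) q
  have : invNumOp (Xvar K k * mono K l - mono K l * Xvar K k) =
      ((l.length + 1 : ℕ) : K)⁻¹ • (Xvar K k * mono K l - mono K l * Xvar K k) := by
    simp [← mono_cons, ← mono_concat, invNumOp_mono, smul_sub]
  simpa [this] using Submodule.smul_mem _ _ (commutator_mem_range_commutatorSum k (mono K l))

lemma invNumOp_mem_range {x : FreePoly K n} (hx : x ∈ LinearMap.range (commutatorSum K n)) :
    invNumOp x ∈ LinearMap.range (commutatorSum K n) := by
  obtain ⟨Q, rfl⟩ := hx
  rw [commutatorSum_apply, map_sum]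
  exact Submodule.sum_mem _ fun k _ => invNumOp_commutator_mem k (Q k)

end

variable {K : Type} [Field K] [CharZero K] {n : ℕ}

lemma invNumOp_numOp (P : FreePoly K n) : invNumOp (numOp P) = P - P.coeff 1 • 1 := by
  have : invNumOp ∘ₗ numOp =
      LinearMap.id - ((MonoidAlgebra.basis _ K).coord 1).smulRight (1 : FreePoly K n) :=
    FreePoly.linearMap_ext fun l => by
      rw [LinearMap.comp_apply, numOp_mono, map_nsmul, invNumOp_mono]
      rcases l.eq_nil_or_concat with rfl | ⟨l, k, rfl⟩
      · simp [MonoidAlgebra.basis, mono_nil]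
      · have : (l.length + 1 : K) ≠ 0 := Nat.cast_add_one_ne_zero l.length
        simp [MonoidAlgebra.basis, mono, mul_inv_cancel₀ this]
  simpa [MonoidAlgebra.basis] using congr($this P)

theorem cycDeriv_eq_zero_iff_scalar_add_sum_commutators (P : FreePoly K n) :
    (∀ j : Fin n, cycDeriv j P = 0) ↔
      ∃ (c : K) (Q : Fin n → FreePoly K n),
        P = c • 1 + ∑ k : Fin n, (Xvar K k * Q k - Q k * Xvar K k) := by
  constructor
  · intro h
    have hC : cycSym P = 0 := by simp [← sum_Xvar_mul_cycDeriv, h]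
    have hN : numOp P ∈ LinearMap.range (commutatorSum K n) := by
      simpa [hC] using numOp_sub_cycSym_mem P
    obtain ⟨Q, hQ⟩ := invNumOp_mem_range hN
    refine ⟨P.coeff 1, Q, ?_⟩
    rw [← commutatorSum_apply, hQ, invNumOp_numOp, add_sub_cancel]
  · rintro ⟨c, Q, rfl⟩ j
    simp [cycDeriv_one, cycDeriv_mul_comm j (Xvar K _)]
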